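/- Let β̂_n = Σ_n⁻¹ b_n, e_i = y_i − x_iᵀβ̂_n, σ_b² = (1/n²)Σ_{i=1}^n π_i⁻¹‖x_i‖² e_i². For every δ ∈ (0,1), P( ‖b_s − Σ_s β̂_n‖ > σ_b / (√r · δ) ) ≤ δ, where Σ_s = (1/n)Σ_i (γ_i/p_i)x_i x_iᵀ and b_s = (1/n)Σ_i (γ_i/p_i)y_i x_i. -/

import Mathlib

/-! With residuals `e_i`, the deviation `b_s − Σ_s β̂_n` equals `n⁻¹ Σ_i (γ_i / p_i) e_i x_i`, and the
normal equations `Σ_n β̂_n = b_n` say `Σ_i e_i x_i = 0`, so it is centred. Independence of the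
`γ_i` makes the variances of its coordinates add up, giving
`E‖b_s − Σ_s β̂_n‖² = n⁻² Σ_i (1/p_i − 1) e_i² ‖x_i‖² ≤ σ_b² / r`,
and Chebyshev's inequality at level `σ_b / (√r δ)` bounds the probability by `δ² ≤ δ`. -/

open MeasureTheory ProbabilityTheory Matrix

noncomputable def euclNorm {d : ℕ} (v : Fin d → ℝ) : ℝ := Real.sqrt (∑ i, v i ^ 2)

lemma euclNorm_sq {d : ℕ} (v : Fin d → ℝ) : euclNorm v ^ 2 = ∑ k, v k ^ 2 :=
  Real.sq_sqrt (Finset.sum_nonneg fun k _ => sq_nonneg (v k))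

lemma euclNorm_smul {d : ℕ} (c : ℝ) (v : Fin d → ℝ) : euclNorm (c • v) = |c| * euclNorm v := by
  simp only [euclNorm, Pi.smul_apply, smul_eq_mul, mul_pow, ← Finset.mul_sum]
  rw [Real.sqrt_mul (sq_nonneg c), Real.sqrt_sq_eq_abs]

lemma sum_smul_sub_sum_smul_vecMulVec_mulVec {R ι m : Type*} [CommRing R] [Fintype ι] [Fintype m]
    (u y : ι → R) (x : ι → m → R) (β : m → R) :
    ∑ i, u i • y i • x i - (∑ i, u i • vecMulVec (x i) (x i)) *ᵥ β
      = ∑ i, u i • (y i - x i ⬝ᵥ β) • x i := by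
  simp only [sum_mulVec, smul_mulVec, vecMulVec_mulVec, op_smul_eq_smul, sub_smul, smul_sub,
    Finset.sum_sub_distrib]

lemma sum_sub_dotProduct_smul_eq_zero {R ι m : Type*} [Field R] [Fintype ι] [Fintype m] {c : R}
    (hc : c ≠ 0) {y : ι → R} {x : ι → m → R} {β : m → R}
    (h : (c • ∑ i, vecMulVec (x i) (x i)) *ᵥ β = c • ∑ i, y i • x i) :
    ∑ i, (y i - x i ⬝ᵥ β) • x i = 0 := by
  have halg := sum_smul_sub_sum_smul_vecMulVec_mulVec (fun _ => (1 : R)) y x β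
  simp only [one_smul] at halg
  rw [← halg, sub_eq_zero]
  exact (smul_right_injective _ hc (by rwa [smul_mulVec] at h)).symm

section ZeroOne

variable {Ω : Type*} [MeasurableSpace Ω] {μ : Measure Ω} {X : Ω → ℝ}

lemma memLp_of_zero_one [IsFiniteMeasure μ] (hX : Measurable X) (h01 : ∀ ω, X ω = 0 ∨ X ω = 1)
    (q : ENNReal) : MemLp X q μ :=
  MemLp.of_bound hX.aestronglyMeasurable 1 <| ae_of_all _ fun ω => by
    rcases h01 ω with h | h <;> simp [h]

lemma integral_of_zero_one (hX : Measurable X) (h01 : ∀ ω, X ω = 0 ∨ X ω = 1) :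
    ∫ ω, X ω ∂μ = μ.real {ω | X ω = 1} := by
  have hX_eq : X = {ω | X ω = 1}.indicator 1 := funext fun ω => by
    rcases h01 ω with h | h <;> simp [Set.indicator, h]
  conv_lhs => rw [hX_eq]
  exact integral_indicator_one (hX (measurableSet_singleton 1))

lemma variance_of_zero_one [IsProbabilityMeasure μ] (hX : Measurable X)
    (h01 : ∀ ω, X ω = 0 ∨ X ω = 1) :
    Var[X; μ] = μ.real {ω | X ω = 1} * (1 - μ.real {ω | X ω = 1}) := by
  have hsq : X ^ 2 = X := funext fun ω => by rcases h01 ω with h | h <;> simp [h]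
  rw [variance_eq_sub (memLp_of_zero_one hX h01 2), hsq, integral_of_zero_one hX h01]
  ring

end ZeroOne

lemma integrable_euclNorm_sq_sum_smul {Ω ι : Type*} [MeasurableSpace Ω] {μ : Measure Ω}
    [Fintype ι] {d : ℕ} {f : ι → Ω → ℝ} (hf : ∀ i, MemLp (f i) 2 μ) (v : ι → Fin d → ℝ) :
    Integrable (fun ω => euclNorm (∑ i, f i ω • v i) ^ 2) μ := by
  simp only [euclNorm_sq, Finset.sum_apply, Pi.smul_apply, smul_eq_mul]
  exact integrable_finsetSum _ fun k _ =>
    (memLp_finsetSum _ fun i _ => (hf i).mul_const (v i k)).integrable_sq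

section BernoulliSum

variable {Ω ι : Type*} [MeasurableSpace Ω] {μ : Measure Ω} [IsProbabilityMeasure μ] [Fintype ι]
  {γ : ι → Ω → ℝ} {p : ι → ℝ}

lemma integral_sq_sum_div_mul_eq (hγ : ∀ i, Measurable (γ i))
    (h01 : ∀ i ω, γ i ω = 0 ∨ γ i ω = 1) (hind : iIndepFun γ μ)
    (hp : ∀ i, μ.real {ω | γ i ω = 1} = p i) (hp0 : ∀ i, p i ≠ 0) {a : ι → ℝ}
    (ha : ∑ i, a i = 0) :
    ∫ ω, (∑ i, γ i ω / p i * a i) ^ 2 ∂μ = ∑ i, (1 / p i - 1) * a i ^ 2 := by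
  set Y : ι → Ω → ℝ := fun i ω => a i / p i * γ i ω
  have hY : ∀ i, MemLp (Y i) 2 μ := fun i => (memLp_of_zero_one (hγ i) (h01 i) 2).const_mul _
  have hsq : (fun ω => (∑ i, γ i ω / p i * a i) ^ 2) = (∑ i, Y i) ^ 2 := by
    funext ω
    simp only [Y, Pi.pow_apply, Finset.sum_apply]
    exact congrArg (· ^ 2) (Finset.sum_congr rfl fun i _ => by ring)
  have hmean : ∫ ω, (∑ i, Y i) ω ∂μ = 0 := by
    simp only [Finset.sum_apply]
    rw [integral_finsetSum _ fun i _ => (hY i).integrable one_le_two]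
    simp only [Y, integral_const_mul, integral_of_zero_one (hγ _) (h01 _), hp]
    rw [← ha]
    exact Finset.sum_congr rfl fun i _ => div_mul_cancel₀ _ (hp0 i)
  have hpair : (↑(Finset.univ : Finset ι) : Set ι).Pairwise fun i j => Y i ⟂ᵢ[μ] Y j :=
    fun i _ j _ hij => (hind.indepFun hij).comp (measurable_const_mul _) (measurable_const_mul _)
  -- `∑ Y` is centred, so its second moment is its variance, additive over independent summands.
  have hvar := IndepFun.variance_sum (fun i _ => hY i) hpair
  rw [variance_eq_sub (memLp_finsetSum' _ fun i _ => hY i), hmean] at hvar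
  rw [hsq, ← sub_zero (∫ ω, _ ∂μ), ← zero_pow two_ne_zero (M₀ := ℝ), hvar]
  refine Finset.sum_congr rfl fun i _ => ?_
  rw [variance_const_mul, variance_of_zero_one (hγ i) (h01 i), hp]
  field_simp [hp0 i]

lemma integral_euclNorm_sq_sum_div_smul_eq (hγ : ∀ i, Measurable (γ i))
    (h01 : ∀ i ω, γ i ω = 0 ∨ γ i ω = 1) (hind : iIndepFun γ μ)
    (hp : ∀ i, μ.real {ω | γ i ω = 1} = p i) (hp0 : ∀ i, p i ≠ 0) {d : ℕ} {c : ι → Fin d → ℝ}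
    (hc : ∑ i, c i = 0) :
    ∫ ω, euclNorm (∑ i, (γ i ω / p i) • c i) ^ 2 ∂μ = ∑ i, (1 / p i - 1) * euclNorm (c i) ^ 2 := by
  have hmem : ∀ i k, MemLp (fun ω => γ i ω / p i * c i k) 2 μ := fun i k => by
    simpa only [div_mul_eq_mul_div, mul_div_assoc] using
      (memLp_of_zero_one (hγ i) (h01 i) 2).mul_const (c i k / p i)
  simp only [euclNorm_sq, Finset.sum_apply, Pi.smul_apply, smul_eq_mul, Finset.mul_sum]
  rw [integral_finsetSum _ fun k _ =>
    (memLp_finsetSum _ fun i _ => hmem i k).integrable_sq, Finset.sum_comm]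
  refine Finset.sum_congr rfl fun k _ => integral_sq_sum_div_mul_eq hγ h01 hind hp hp0 ?_
  simpa only [Finset.sum_apply, Pi.zero_apply] using congrFun hc k

end BernoulliSum

lemma measure_sqrt_div_lt_le_sq {Ω : Type*} [MeasurableSpace Ω] {μ : Measure Ω}
    [IsFiniteMeasure μ] {f : Ω → ℝ} {M δ : ℝ} (hf : Integrable (fun ω => f ω ^ 2) μ)
    (hM : ∫ ω, f ω ^ 2 ∂μ ≤ M) (hδ : 0 < δ) :
    μ {ω | √M / δ < f ω} ≤ ENNReal.ofReal (δ ^ 2) := by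
  rcases le_or_gt M 0 with hM0 | hM0
  -- Here `√M = 0` and Markov's inequality says nothing; instead `f = 0` a.e.
  · have hzero : (fun ω => f ω ^ 2) =ᵐ[μ] 0 :=
      (integral_eq_zero_iff_of_nonneg (fun ω => sq_nonneg (f ω)) hf).1
        (le_antisymm (hM.trans hM0) (integral_nonneg fun ω => sq_nonneg (f ω)))
    have hnull : μ {ω | √M / δ < f ω} = 0 := by
      rw [Real.sqrt_eq_zero'.2 hM0, zero_div]
      refine measure_mono_null (fun ω (hω : 0 < f ω) => ?_) (ae_iff.1 hzero)
      exact (pow_pos hω 2).ne'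
    rw [hnull]
    exact zero_le
  · have hsub : {ω | √M / δ < f ω} ⊆ {ω | M / δ ^ 2 ≤ f ω ^ 2} := fun ω (hω : √M / δ < f ω) => by
      have := pow_le_pow_left₀ (by positivity) hω.le 2
      rwa [div_pow, Real.sq_sqrt hM0.le] at this
    have hmarkov := mul_meas_ge_le_integral_of_nonneg
      (ae_of_all _ fun ω => sq_nonneg (f ω)) hf (M / δ ^ 2)
    rw [ENNReal.le_ofReal_iff_toReal_le (measure_ne_top _ _) (sq_nonneg δ), ← measureReal_def]
    calc μ.real {ω | √M / δ < f ω} ≤ μ.real {ω | M / δ ^ 2 ≤ f ω ^ 2} := measureReal_mono hsub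
      _ ≤ δ ^ 2 := by
        refine le_of_mul_le_mul_left ?_ (div_pos hM0 (pow_pos hδ 2))
        rw [div_mul_cancel₀ M (pow_pos hδ 2).ne']
        exact hmarkov.trans hM

theorem stmt9_general {n d : ℕ} (hn : 1 ≤ n)
    (x : Fin n → Fin d → ℝ) (y : Fin n → ℝ)
    (Sn : Matrix (Fin d) (Fin d) ℝ)
    (hSn : Sn = (n : ℝ)⁻¹ • ∑ i, vecMulVec (x i) (x i))
    (hpd : Sn.PosDef)
    (bn : Fin d → ℝ) (hbn : bn = (n : ℝ)⁻¹ • ∑ i, y i • x i)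
    (βhat : Fin d → ℝ) (hβ : βhat = Sn⁻¹ *ᵥ bn)
    (e : Fin n → ℝ) (he : ∀ i, e i = y i - ∑ k, x i k * βhat k)
    (w : Fin n → ℝ) (hw0 : ∀ i, 0 < w i)
    (r : ℝ) (hr : 0 < r)
    (p : Fin n → ℝ) (hp : ∀ i, p i = r * w i)
    (sb2 : ℝ) (hsb2 : sb2 = ((n : ℝ) ^ 2)⁻¹ * ∑ i, (w i)⁻¹ * (∑ k, x i k ^ 2) * e i ^ 2)
    {Ω : Type} [MeasurableSpace Ω] (μ : Measure Ω) [IsProbabilityMeasure μ]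
    (γ : Fin n → Ω → ℝ) (hmeas : ∀ i, Measurable (γ i))
    (h01 : ∀ i ω, γ i ω = 0 ∨ γ i ω = 1)
    (hBer : ∀ i, μ {ω | γ i ω = 1} = ENNReal.ofReal (p i))
    (hind : iIndepFun γ μ)
    (Ss : Ω → Matrix (Fin d) (Fin d) ℝ)
    (hSs : ∀ ω, Ss ω = (n : ℝ)⁻¹ • ∑ i, (γ i ω / p i) • vecMulVec (x i) (x i))
    (bs : Ω → Fin d → ℝ)
    (hbs : ∀ ω, bs ω = (n : ℝ)⁻¹ • ∑ i, (γ i ω / p i) • y i • x i)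
    (δ : ℝ) (hδ : δ ∈ Set.Ioo (0 : ℝ) 1) :
    μ {ω | Real.sqrt sb2 / (Real.sqrt r * δ) < euclNorm (bs ω - Ss ω *ᵥ βhat)} ≤
      ENNReal.ofReal δ := by
  obtain ⟨hδ0, hδ1⟩ := hδ
  have hp0 : ∀ i, 0 < p i := fun i => hp i ▸ mul_pos hr (hw0 i)
  have hpreal : ∀ i, μ.real {ω | γ i ω = 1} = p i := fun i => by
    rw [measureReal_def, hBer i, ENNReal.toReal_ofReal (hp0 i).le]
  have he_dot : ∀ i, e i = y i - x i ⬝ᵥ βhat := he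
  have hnormal : Sn *ᵥ βhat = bn := by
    rw [hβ, mulVec_mulVec, mul_nonsing_inv Sn ((isUnit_iff_isUnit_det Sn).1 hpd.isUnit), one_mulVec]
  have hres : ∑ i, e i • x i = 0 := by
    simpa only [he_dot] using sum_sub_dotProduct_smul_eq_zero (by positivity : (n : ℝ)⁻¹ ≠ 0)
      (hSn ▸ hbn ▸ hnormal)
  set V : Ω → Fin d → ℝ := fun ω => ∑ i, (γ i ω / p i) • e i • x i
  have hdev_sq : ∀ ω, euclNorm (bs ω - Ss ω *ᵥ βhat) ^ 2 = ((n : ℝ) ^ 2)⁻¹ * euclNorm (V ω) ^ 2 := by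
    intro ω
    rw [hbs, hSs, smul_mulVec, ← smul_sub, sum_smul_sub_sum_smul_vecMulVec_mulVec]
    simp only [← he_dot, euclNorm_smul, mul_pow, sq_abs, inv_pow, V]
  have hint : Integrable (fun ω => euclNorm (bs ω - Ss ω *ᵥ βhat) ^ 2) μ := by
    simp only [hdev_sq]
    refine (integrable_euclNorm_sq_sum_smul (fun i => ?_) _).const_mul _
    simpa only [div_eq_mul_inv] using (memLp_of_zero_one (hmeas i) (h01 i) 2).mul_const (p i)⁻¹
  have hmoment : ∫ ω, euclNorm (bs ω - Ss ω *ᵥ βhat) ^ 2 ∂μ ≤ sb2 / r := by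
    simp only [hdev_sq]
    rw [integral_const_mul, integral_euclNorm_sq_sum_div_smul_eq hmeas h01 hind hpreal
      (fun i => (hp0 i).ne') hres, hsb2, mul_div_assoc, Finset.sum_div]
    gcongr with i
    rw [euclNorm_smul, mul_pow, sq_abs, euclNorm_sq]
    calc _ ≤ 1 / p i * (e i ^ 2 * ∑ k, x i k ^ 2) := by gcongr; exact sub_le_self _ zero_le_one
      _ = _ := by rw [hp]; field_simp
  calc μ {ω | √sb2 / (√r * δ) < euclNorm (bs ω - Ss ω *ᵥ βhat)}
      = μ {ω | √(sb2 / r) / δ < euclNorm (bs ω - Ss ω *ᵥ βhat)} := by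
        rw [Real.sqrt_div' _ hr.le, div_div]
    _ ≤ ENNReal.ofReal (δ ^ 2) := measure_sqrt_div_lt_le_sq hint hmoment hδ0
    _ ≤ ENNReal.ofReal δ := ENNReal.ofReal_le_ofReal (pow_le_of_le_one hδ0.le hδ1.le two_ne_zero)

/-- for every `δ ∈ (0,1)`,
`P(‖b_s − Σ_s β̂_n‖ > σ_b/(√r·δ)) ≤ δ`, where `σ_b² = (1/n²)Σ_i π_i⁻¹‖x_i‖² e_i²`. -/
theorem stmt9 {n d : ℕ} (hn : 1 ≤ n) (hd : 1 ≤ d)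
    (x : Fin n → Fin d → ℝ) (y : Fin n → ℝ)
    (Sn : Matrix (Fin d) (Fin d) ℝ)
    (hSn : Sn = (n : ℝ)⁻¹ • ∑ i, vecMulVec (x i) (x i))
    (hpd : Sn.PosDef)
    (bn : Fin d → ℝ) (hbn : bn = (n : ℝ)⁻¹ • ∑ i, y i • x i)
    (βhat : Fin d → ℝ) (hβ : βhat = Sn⁻¹ *ᵥ bn)
    (e : Fin n → ℝ) (he : ∀ i, e i = y i - ∑ k, x i k * βhat k)
    (w : Fin n → ℝ) (hw0 : ∀ i, 0 < w i) (hw1 : ∑ i, w i = 1)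
    (r : ℝ) (hr : 0 < r)
    (p : Fin n → ℝ) (hp : ∀ i, p i = r * w i) (hp1 : ∀ i, p i ≤ 1)
    (sb2 : ℝ) (hsb2 : sb2 = ((n : ℝ) ^ 2)⁻¹ * ∑ i, (w i)⁻¹ * (∑ k, x i k ^ 2) * e i ^ 2)
    {Ω : Type} [MeasurableSpace Ω] (μ : Measure Ω) [IsProbabilityMeasure μ]
    (γ : Fin n → Ω → ℝ) (hmeas : ∀ i, Measurable (γ i))
    (h01 : ∀ i ω, γ i ω = 0 ∨ γ i ω = 1)
    (hBer : ∀ i, μ {ω | γ i ω = 1} = ENNReal.ofReal (p i))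
    (hind : iIndepFun γ μ)
    (Ss : Ω → Matrix (Fin d) (Fin d) ℝ)
    (hSs : ∀ ω, Ss ω = (n : ℝ)⁻¹ • ∑ i, (γ i ω / p i) • vecMulVec (x i) (x i))
    (bs : Ω → Fin d → ℝ)
    (hbs : ∀ ω, bs ω = (n : ℝ)⁻¹ • ∑ i, (γ i ω / p i) • y i • x i)
    (δ : ℝ) (hδ : δ ∈ Set.Ioo (0 : ℝ) 1) :
    μ {ω | Real.sqrt sb2 / (Real.sqrt r * δ) < euclNorm (bs ω - Ss ω *ᵥ βhat)} ≤
      ENNReal.ofReal δ :=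
  stmt9_general hn x y Sn hSn hpd bn hbn βhat hβ e he w hw0 r hr p hp sb2 hsb2 μ γ hmeas h01 hBer
    hind Ss hSs bs hbs δ hδ
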